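/- Failure of second-order identifiability for the Gaussian location–covariance family (Proposition 4.1): For every d ≥ 1, the family of d-variate Gaussian densities {f(·|θ,Σ) : θ ∈ ℝ^d, Σ ∈ S_d^{++}}, where f(x|θ,Σ) = (2π)^{−d/2} det(Σ)^{−1/2} exp(−(x−θ)ᵀΣ^{−1}(x−θ)/2), is NOT identifiable in the second order. In fact this already fails with k = 1: for every (θ,Σ) ∈ ℝ^d × S_d^{++} and every nonzero ν ∈ ℝ^d, taking α = 0, β = 0, η = 0 and the nonzero symmetric matrix γ = −2ννᵀ, one has νᵀ(∂²f/∂θ∂θᵀ(x|θ,Σ))ν + tr((∂f/∂Σ(x|θ,Σ))ᵀ γ) = 0 for every x ∈ ℝ^d, so the coefficients required to vanish in the definition of second-order identifiability need not vanish. -/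

import Mathlib

open MeasureTheory Matrix

noncomputable section

attribute [local instance] Matrix.normedAddCommGroup Matrix.normedSpace

abbrev Vec (d : ℕ) := Fin d → ℝ
abbrev Mat (d : ℕ) := Matrix (Fin d) (Fin d) ℝ

/-- The `d`-variate Gaussian density with mean `θ` and covariance `M`. -/
def gaussDensity (d : ℕ) (θ : Vec d) (M : Mat d) (x : Vec d) : ℝ :=
  ((2 * Real.pi) ^ ((d : ℝ) / 2) * Real.sqrt M.det)⁻¹ *
    Real.exp (-((x - θ) ⬝ᵥ (M⁻¹ *ᵥ (x - θ))) / 2)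

/-- Directional derivative in the location parameter: `βᵀ ∂f/∂θ`. -/
def dTheta {d d₁ d₂ : ℕ} (f : Vec d₁ × Mat d₂ → Vec d → ℝ)
    (p : Vec d₁ × Mat d₂) (β : Vec d₁) (x : Vec d) : ℝ :=
  deriv (fun t : ℝ => f (p.1 + t • β, p.2) x) 0

/-- Directional derivative in the matrix parameter: `tr((∂f/∂Σ)ᵀ γ)`. -/
def dSigma {d d₁ d₂ : ℕ} (f : Vec d₁ × Mat d₂ → Vec d → ℝ)
    (p : Vec d₁ × Mat d₂) (γ : Mat d₂) (x : Vec d) : ℝ :=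
  deriv (fun t : ℝ => f (p.1, p.2 + t • γ) x) 0

/-- Second directional derivative in the location parameter: `νᵀ (∂²f/∂θ∂θᵀ) ν`. -/
def dTheta2 {d d₁ d₂ : ℕ} (f : Vec d₁ × Mat d₂ → Vec d → ℝ)
    (p : Vec d₁ × Mat d₂) (ν : Vec d₁) (x : Vec d) : ℝ :=
  iteratedDeriv 2 (fun t : ℝ => f (p.1 + t • ν, p.2) x) 0

/-- Second directional derivative in the matrix parameter:
`tr((∂/∂Σ (tr((∂f/∂Σ)ᵀ η)))ᵀ η)`. -/
def dSigma2 {d d₁ d₂ : ℕ} (f : Vec d₁ × Mat d₂ → Vec d → ℝ)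
    (p : Vec d₁ × Mat d₂) (η : Mat d₂) (x : Vec d) : ℝ :=
  iteratedDeriv 2 (fun t : ℝ => f (p.1, p.2 + t • η) x) 0

/-- Mixed second directional derivative: `νᵀ ∂/∂θ (tr((∂f/∂Σ)ᵀ η))`. -/
def dMixed {d d₁ d₂ : ℕ} (f : Vec d₁ × Mat d₂ → Vec d → ℝ)
    (p : Vec d₁ × Mat d₂) (ν : Vec d₁) (η : Mat d₂) (x : Vec d) : ℝ :=
  deriv (fun s : ℝ => deriv (fun t : ℝ => f (p.1 + s • ν, p.2 + t • η) x) 0) 0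

/-- Second-order identifiability of the family `f` over the parameter set `S`,
with respect to Lebesgue measure restricted to `X`. -/
def SecondOrderIdent {d d₁ d₂ : ℕ} (X : Set (Vec d))
    (f : Vec d₁ × Mat d₂ → Vec d → ℝ) (S : Set (Vec d₁ × Mat d₂)) : Prop :=
  (∀ x ∈ X, ∀ p ∈ S, ContDiffAt ℝ 2 (fun q => f q x) p) ∧
  ∀ (k : ℕ) (φ : Fin k → Vec d₁ × Mat d₂), (∀ i, φ i ∈ S) → Function.Injective φ →
    ∀ (α : Fin k → ℝ) (β ν : Fin k → Vec d₁) (γ η : Fin k → Mat d₂),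
      (∀ i, (γ i).IsSymm) → (∀ i, (η i).IsSymm) →
      (∀ᵐ x ∂(volume.restrict X),
        ∑ i, (α i * f (φ i) x + dTheta f (φ i) (β i) x + dTheta2 f (φ i) (ν i) x
          + dSigma f (φ i) (γ i) x + 2 * dMixed f (φ i) (ν i) (η i) x
          + dSigma2 f (φ i) (η i) x) = 0) →
      ∀ i, α i = 0 ∧ β i = 0 ∧ ν i = 0 ∧ γ i = 0 ∧ η i = 0

/-!
The Gaussian density solves a heat equation in its parameters: moving the mean along `ν` twice
has the same effect as moving the covariance once along `2ννᵀ`. Writing `a = νᵀΣ⁻¹ν` and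
`b = νᵀΣ⁻¹(x - θ)`, both derivatives equal `f · (b² - a)`: along the mean `f` is the exponential of
a quadratic in `t`, and along the covariance the matrix determinant lemma and the
Sherman–Morrison formula make `det` and `⁻¹` of the rank-one update explicit. So the coefficients
`ν ≠ 0`, `γ = -2ννᵀ` (all others zero) give a vanishing combination at a single parameter.
-/

open Real

namespace Matrix

theorem IsSymm.dotProduct_mulVec_comm {n R : Type*} [Fintype n] [CommSemiring R]
    {A : Matrix n n R} (hA : A.IsSymm) (u w : n → R) : u ⬝ᵥ A *ᵥ w = w ⬝ᵥ A *ᵥ u := by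
  rw [dotProduct_mulVec, ← hA.eq, vecMul_transpose, dotProduct_comm, hA.eq]

variable {n K : Type*} [Fintype n] [DecidableEq n] [Field K]

theorem det_add_vecMulVec {A : Matrix n n K} (hA : IsUnit A.det) (u v : n → K) :
    (A + vecMulVec u v).det = A.det * (1 + v ⬝ᵥ A⁻¹ *ᵥ u) := by
  rw [vecMulVec_eq Unit, det_add_mul _ _ hA, ← replicateRow_vecMul, det_unique (n := Unit),
    dotProduct_mulVec]
  rfl

theorem inv_add_vecMulVec {A : Matrix n n K} (hA : IsUnit A.det) {u v : n → K}
    (h : 1 + v ⬝ᵥ A⁻¹ *ᵥ u ≠ 0) :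
    (A + vecMulVec u v)⁻¹
      = A⁻¹ - (1 + v ⬝ᵥ A⁻¹ *ᵥ u)⁻¹ • vecMulVec (A⁻¹ *ᵥ u) (v ᵥ* A⁻¹) := by
  apply inv_eq_right_inv
  have hAA : A * A⁻¹ = 1 := mul_nonsing_inv A hA
  rw [Matrix.add_mul, Matrix.mul_sub, Matrix.mul_sub, hAA, mul_smul_comm, mul_smul_comm,
    mul_vecMulVec, mulVec_mulVec, hAA, one_mulVec, vecMulVec_mul, vecMulVec_mul_vecMulVec,
    vecMulVec_smul, smul_smul]
  set s := v ⬝ᵥ A⁻¹ *ᵥ u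
  set W := vecMulVec u (v ᵥ* A⁻¹)
  have hW : (1 + s)⁻¹ • W + ((1 + s)⁻¹ * s) • W = W := by
    rw [← add_smul, ← mul_one_add, inv_mul_cancel₀ h, one_smul]
  nth_rewrite 2 [← hW]
  abel

end Matrix

theorem hasDerivAt_mul_exp_neg_quadratic (C q b a t : ℝ) :
    HasDerivAt (fun t => C * exp (-(q - 2 * t * b + t ^ 2 * a) / 2))
      (C * exp (-(q - 2 * t * b + t ^ 2 * a) / 2) * (b - t * a)) t := by
  have hexponent : HasDerivAt (fun t => -(q - 2 * t * b + t ^ 2 * a) / 2) (b - t * a) t :=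
    ((((((hasDerivAt_id' t).const_mul 2).mul_const b).const_sub q).fun_add
      ((hasDerivAt_pow 2 t).mul_const a)).fun_neg.div_const 2).congr_deriv (by norm_num; ring)
  simpa only [mul_assoc] using hexponent.exp.const_mul C

theorem iteratedDeriv_two_mul_exp_neg_quadratic (C q b a : ℝ) :
    iteratedDeriv 2 (fun t => C * exp (-(q - 2 * t * b + t ^ 2 * a) / 2)) 0
      = C * exp (-q / 2) * (b ^ 2 - a) := by
  have hderiv : deriv (fun t => C * exp (-(q - 2 * t * b + t ^ 2 * a) / 2))
      = fun t => C * exp (-(q - 2 * t * b + t ^ 2 * a) / 2) * (b - t * a) :=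
    funext fun t => (hasDerivAt_mul_exp_neg_quadratic C q b a t).deriv
  have hlin : HasDerivAt (fun t : ℝ => b - t * a) (-a) 0 := by
    simpa using ((hasDerivAt_id' (0 : ℝ)).mul_const a).const_sub b
  rw [iteratedDeriv_succ, iteratedDeriv_one, hderiv,
    ((hasDerivAt_mul_exp_neg_quadratic C q b a 0).fun_mul hlin).deriv]
  norm_num; ring

/-- The Gaussian density along `Σ + t c ννᵀ`, with `a = νᵀΣ⁻¹ν` and `b = νᵀΣ⁻¹(x - θ)`. -/
theorem hasDerivAt_mul_inv_sqrt_mul_exp_zero (C q a b c : ℝ) :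
    HasDerivAt
      (fun t => C * (√(1 + t * c * a))⁻¹ * exp (-(q - t * c * b ^ 2 / (1 + t * c * a)) / 2))
      (C * exp (-q / 2) * (c / 2 * (b ^ 2 - a))) 0 := by
  have hlin : HasDerivAt (fun t : ℝ => 1 + t * c * a) (c * a) 0 := by
    simpa using (((hasDerivAt_id' (0 : ℝ)).mul_const c).mul_const a).const_add 1
  have hprefactor := ((hlin.sqrt (by simp)).fun_inv (by simp)).const_mul C
  have hratio := (((hasDerivAt_id' (0 : ℝ)).mul_const c).mul_const (b ^ 2)).fun_div hlin (by simp)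
  have hexp := ((hratio.const_sub q).fun_neg.div_const 2).exp
  refine (hprefactor.fun_mul hexp).congr_deriv ?_
  norm_num; ring

section Gaussian

variable {d : ℕ} {M : Mat d}

theorem iteratedDeriv_two_gaussDensity_mean (hM : M.IsSymm) (θ ν x : Vec d) :
    iteratedDeriv 2 (fun t : ℝ => gaussDensity d (θ + t • ν) M x) 0
      = gaussDensity d θ M x * ((ν ⬝ᵥ M⁻¹ *ᵥ (x - θ)) ^ 2 - ν ⬝ᵥ M⁻¹ *ᵥ ν) := by
  have hquad (t : ℝ) : (x - (θ + t • ν)) ⬝ᵥ M⁻¹ *ᵥ (x - (θ + t • ν))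
      = (x - θ) ⬝ᵥ M⁻¹ *ᵥ (x - θ) - 2 * t * (ν ⬝ᵥ M⁻¹ *ᵥ (x - θ))
        + t ^ 2 * (ν ⬝ᵥ M⁻¹ *ᵥ ν) := by
    rw [← sub_sub]
    simp only [mulVec_sub, mulVec_smul, sub_dotProduct, dotProduct_sub, smul_dotProduct,
      dotProduct_smul, smul_eq_mul, hM.inv.dotProduct_mulVec_comm (x - θ) ν]
    ring
  simp only [gaussDensity, hquad, iteratedDeriv_two_mul_exp_neg_quadratic]

theorem deriv_gaussDensity_cov_add_smul_vecMulVec (hM : M.IsSymm) (hdet : 0 < M.det)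
    (c : ℝ) (θ ν x : Vec d) :
    deriv (fun t : ℝ => gaussDensity d θ (M + t • (c • vecMulVec ν ν)) x) 0
      = gaussDensity d θ M x * (c / 2 * ((ν ⬝ᵥ M⁻¹ *ᵥ (x - θ)) ^ 2 - ν ⬝ᵥ M⁻¹ *ᵥ ν)) := by
  set a := ν ⬝ᵥ M⁻¹ *ᵥ ν
  set b := ν ⬝ᵥ M⁻¹ *ᵥ (x - θ)
  have hM' : IsUnit M.det := hdet.ne'.isUnit
  have hrank (t : ℝ) : M + t • (c • vecMulVec ν ν) = M + vecMulVec ((t * c) • ν) ν := by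
    rw [smul_vecMulVec, smul_smul]
  have hden (t : ℝ) : 1 + ν ⬝ᵥ M⁻¹ *ᵥ ((t * c) • ν) = 1 + t * c * a := by
    rw [mulVec_smul, dotProduct_smul, smul_eq_mul]
  have hnear : ∀ᶠ t in nhds (0 : ℝ), 0 < 1 + t * c * a :=
    continuousAt_const.eventually_lt (by fun_prop) (by simp)
  have hprofile : (fun t : ℝ => gaussDensity d θ (M + t • (c • vecMulVec ν ν)) x)
      =ᶠ[nhds 0] fun t => ((2 * π) ^ ((d : ℝ) / 2) * √M.det)⁻¹ * (√(1 + t * c * a))⁻¹ *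
        exp (-((x - θ) ⬝ᵥ M⁻¹ *ᵥ (x - θ) - t * c * b ^ 2 / (1 + t * c * a)) / 2) := by
    filter_upwards [hnear] with t ht
    have hquad : (x - θ) ⬝ᵥ (M⁻¹ - (1 + t * c * a)⁻¹ •
          vecMulVec (M⁻¹ *ᵥ (t * c) • ν) (ν ᵥ* M⁻¹)) *ᵥ (x - θ)
        = (x - θ) ⬝ᵥ M⁻¹ *ᵥ (x - θ) - t * c * b ^ 2 / (1 + t * c * a) := by
      rw [sub_mulVec, dotProduct_sub, smul_mulVec, vecMulVec_mulVec, ← dotProduct_mulVec]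
      simp only [mulVec_smul, dotProduct_smul, op_smul_eq_mul, smul_eq_mul,
        hM.inv.dotProduct_mulVec_comm (x - θ) ν]
      ring
    rw [gaussDensity, hrank, det_add_vecMulVec hM',
      inv_add_vecMulVec hM' (by rw [hden]; exact ht.ne'), hden, sqrt_mul hdet.le, hquad]
    ring
  rw [hprofile.deriv_eq, (hasDerivAt_mul_inv_sqrt_mul_exp_zero _ _ a b c).deriv, gaussDensity]

theorem gaussDensity_heat_equation (hM : M.IsSymm) (hdet : 0 < M.det) (θ ν x : Vec d) :
    iteratedDeriv 2 (fun t : ℝ => gaussDensity d (θ + t • ν) M x) 0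
      + deriv (fun t : ℝ => gaussDensity d θ (M + t • ((-2 : ℝ) • vecMulVec ν ν)) x) 0 = 0 := by
  rw [iteratedDeriv_two_gaussDensity_mean hM, deriv_gaussDensity_cov_add_smul_vecMulVec hM hdet]
  ring

end Gaussian

section ParametricFamily

variable {d d₁ d₂ : ℕ} (f : Vec d₁ × Mat d₂ → Vec d → ℝ) (p : Vec d₁ × Mat d₂) (x : Vec d)

theorem dTheta_zero : dTheta f p 0 x = 0 := by
  simp [dTheta]

theorem dSigma2_zero : dSigma2 f p 0 x = 0 := by
  simp [dSigma2, iteratedDeriv_const]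

theorem dMixed_zero (ν : Vec d₁) : dMixed f p ν 0 x = 0 := by
  simp [dMixed]

theorem not_secondOrderIdent_of_dTheta2_add_dSigma_eq_zero {X : Set (Vec d)}
    {f : Vec d₁ × Mat d₂ → Vec d → ℝ} {S : Set (Vec d₁ × Mat d₂)} {p : Vec d₁ × Mat d₂}
    (hp : p ∈ S) {ν : Vec d₁} (hν : ν ≠ 0) {γ : Mat d₂} (hγ : γ.IsSymm)
    (h : ∀ x, dTheta2 f p ν x + dSigma f p γ x = 0) : ¬ SecondOrderIdent X f S := by
  rintro ⟨-, hident⟩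
  have hcomb : ∀ᵐ x ∂(volume.restrict X), ∑ _ : Fin 1, (0 * f p x + dTheta f p 0 x
      + dTheta2 f p ν x + dSigma f p γ x + 2 * dMixed f p ν 0 x + dSigma2 f p 0 x) = 0 :=
    ae_of_all _ fun x => by simp [dTheta_zero, dMixed_zero, dSigma2_zero, h x]
  exact hν (hident 1 (fun _ => p) (fun _ => hp) (Function.injective_of_subsingleton _)
    (fun _ => 0) (fun _ => 0) (fun _ => ν) (fun _ => γ) (fun _ => 0) (fun _ => hγ)
    (fun _ => isSymm_zero) hcomb 0).2.2.1

end ParametricFamily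

/-- **Proposition 4.1**: the Gaussian location–covariance family is *not*
identifiable in the second order; already for `k = 1`, taking `γ = −2ννᵀ` with
`ν ≠ 0` one has `νᵀ(∂²f/∂θ∂θᵀ)ν + tr((∂f/∂Σ)ᵀγ) = 0` for every `x`. -/
theorem gaussian_not_second_order_identifiable (d : ℕ) (hd : 1 ≤ d) :
    (∀ (x θ : Vec d) (M : Mat d), M.PosDef → ∀ ν : Vec d, ν ≠ 0 →
      iteratedDeriv 2 (fun t : ℝ => gaussDensity d (θ + t • ν) M x) 0
        + deriv (fun t : ℝ =>
            gaussDensity d θ (M + t • ((-2 : ℝ) • vecMulVec ν ν)) x) 0 = 0) ∧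
    ¬ SecondOrderIdent (Set.univ : Set (Vec d))
        (fun p : Vec d × Mat d => gaussDensity d p.1 p.2)
        ((Set.univ : Set (Vec d)) ×ˢ {M : Mat d | M.PosDef}) := by
  have hsymm {M : Mat d} (hM : M.PosDef) : M.IsSymm := isHermitian_iff_isSymm.mp hM.isHermitian
  have heat (x θ : Vec d) (M : Mat d) (hM : M.PosDef) (ν : Vec d) :=
    gaussDensity_heat_equation (hsymm hM) hM.det_pos θ ν x
  refine ⟨fun x θ M hM ν _ => heat x θ M hM ν, ?_⟩
  have hν : (fun _ => 1 : Vec d) ≠ 0 := fun h => one_ne_zero (congrFun h ⟨0, hd⟩)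
  have hγ : ((-2 : ℝ) • vecMulVec (fun _ => 1 : Vec d) fun _ => 1).IsSymm :=
    IsSymm.smul (transpose_vecMulVec _ _) _
  exact not_secondOrderIdent_of_dTheta2_add_dSigma_eq_zero (p := (0, 1))
    ⟨trivial, PosDef.one⟩ hν hγ fun x => heat x 0 1 PosDef.one _
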